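/- Let m be an even positive integer and j, k integers with 0 ≤ j, k < m and gcd(m, gcd(j,k)) = 1. If j and k are both odd, then B_{m,j,k}(z) = 2^m (1−z^2) · ∏_{i=1}^{m/2−1} ( cos(πi(j+k)/m) + z·cos(πi(j−k)/m) )^2; if j or k is even, then B_{m,j,k}(z) = 0. -/

import Mathlib

open Finset

noncomputable def ee (x : ℝ) : ℂ := Complex.exp (2 * Real.pi * Complex.I * x)

noncomputable def B (m : ℕ) (j k : ℤ) (z : ℂ) : ℂ :=
  ∏ i ∈ Finset.Icc 1 m,
    (1 + ee ((i : ℝ) * ((j : ℝ) + (k : ℝ)) / m) + ee ((i : ℝ) * (j : ℝ) / m) * z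
      + ee ((i : ℝ) * (k : ℝ) / m) * z)

lemma ee_half_int (n : ℤ) : ee ((n : ℝ) / 2) = (-1) ^ n := by
  rw [ee, show (2 * (Real.pi:ℂ) * Complex.I * ((n:ℝ)/2 : ℝ)) = (n : ℂ) * ((Real.pi:ℂ) * Complex.I) by push_cast; ring,
    Complex.exp_int_mul, Complex.exp_pi_mul_I]

lemma ee_half_nat (n : ℕ) : ee ((n : ℝ) / 2) = (-1) ^ n := by
  have := ee_half_int (n : ℤ)
  simpa using this

lemma ee_sum (s : Finset ℕ) (f : ℕ → ℝ) : ∏ i ∈ s, ee (f i) = ee (∑ i ∈ s, f i) := by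
  simp only [ee, ← Complex.exp_sum]
  congr 1
  rw [Complex.ofReal_sum, Finset.mul_sum]

lemma factor_eq (a b c : ℝ) (hc : c = a + b) (z : ℂ) :
    1 + ee c + ee a * z + ee b * z
      = 2 * ee (c / 2) * ((Real.cos (Real.pi * c) : ℂ) + z * (Real.cos (Real.pi * (a - b)) : ℂ)) := by
  subst hc
  have hA : Complex.exp ((Real.pi:ℂ) * a * Complex.I) ≠ 0 := Complex.exp_ne_zero _
  have hB : Complex.exp ((Real.pi:ℂ) * b * Complex.I) ≠ 0 := Complex.exp_ne_zero _
  set A := Complex.exp ((Real.pi:ℂ) * a * Complex.I) with hAdef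
  set B := Complex.exp ((Real.pi:ℂ) * b * Complex.I) with hBdef
  have e1 : ee a = A * A := by
    rw [ee, hAdef, ← Complex.exp_add]; ring_nf
  have e2 : ee b = B * B := by
    rw [ee, hBdef, ← Complex.exp_add]; ring_nf
  have e3 : ee (a + b) = A * A * (B * B) := by
    rw [ee, hAdef, hBdef, ← Complex.exp_add, ← Complex.exp_add, ← Complex.exp_add]
    push_cast; ring_nf
  have e4 : ee ((a + b) / 2) = A * B := by
    rw [ee, hAdef, hBdef, ← Complex.exp_add]; push_cast; ring_nf
  have e5 : (Real.cos (Real.pi * (a + b)) : ℂ) = (A * B + (A * B)⁻¹) / 2 := by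
    rw [Complex.ofReal_cos, Complex.cos,
      show ((Real.pi * (a + b) : ℝ) : ℂ) * Complex.I
          = (Real.pi:ℂ) * a * Complex.I + (Real.pi:ℂ) * b * Complex.I by push_cast; ring,
      show (-((Real.pi * (a + b) : ℝ) : ℂ)) * Complex.I
          = -((Real.pi:ℂ) * a * Complex.I + (Real.pi:ℂ) * b * Complex.I) by push_cast; ring,
      Complex.exp_neg, Complex.exp_add, hAdef, hBdef]
  have e6 : (Real.cos (Real.pi * (a - b)) : ℂ) = (A * B⁻¹ + A⁻¹ * B) / 2 := by
    rw [Complex.ofReal_cos, Complex.cos,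
      show ((Real.pi * (a - b) : ℝ) : ℂ) * Complex.I
          = (Real.pi:ℂ) * a * Complex.I + -((Real.pi:ℂ) * b * Complex.I) by push_cast; ring,
      show (-((Real.pi * (a - b) : ℝ) : ℂ)) * Complex.I
          = (Real.pi:ℂ) * b * Complex.I + -((Real.pi:ℂ) * a * Complex.I) by push_cast; ring,
      Complex.exp_add, Complex.exp_add, Complex.exp_neg, Complex.exp_neg, hAdef, hBdef]
    ring
  rw [e1, e2, e3, e4, e5, e6]
  field_simp [hA, hB]
  ring

lemma gauss_real (m : ℕ) : ∑ i ∈ Finset.Icc 1 m, (i : ℝ) = m * (m + 1) / 2 := by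
  induction m with
  | zero => simp
  | succ p ih =>
      rw [Finset.sum_Icc_succ_top (by omega), ih]
      push_cast; ring

theorem B_even (m : ℕ) (hm : 0 < m) (hmeven : Even m) (j k : ℕ) (hj : j < m) (hk : k < m)
    (hcop : Nat.gcd m (Nat.gcd j k) = 1) (z : ℂ) :
    B m j k z = if Odd j ∧ Odd k then
        2 ^ m * (1 - z ^ 2) *
          ∏ i ∈ Finset.Icc 1 (m / 2 - 1),
            ((Real.cos (Real.pi * i * ((j : ℝ) + k) / m) : ℂ)
              + z * (Real.cos (Real.pi * i * ((j : ℝ) - k) / m) : ℂ)) ^ 2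
      else 0 := by
  obtain ⟨n, hm2⟩ := hmeven
  have hm2 : m = 2 * n := by omega
  have hn : 1 ≤ n := by omega
  have hm0 : (m : ℝ) ≠ 0 := by positivity
  have hnotboth : ¬ (Even j ∧ Even k) := by
    rintro ⟨⟨a, ha⟩, ⟨b, hb⟩⟩
    have h2 : 2 ∣ Nat.gcd m (Nat.gcd j k) :=
      Nat.dvd_gcd (by omega) (Nat.dvd_gcd (by omega) (by omega))
    rw [hcop] at h2; omega
  by_cases hodd : Odd j ∧ Odd k
  · -- main case
    rw [if_pos hodd]
    obtain ⟨hoj, hok⟩ := hodd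
    have hjk : Even (j + k) := Odd.add_odd hoj hok
    obtain ⟨t, ht⟩ : ∃ t, j + k = 2 * t := by obtain ⟨t, ht⟩ := hjk; exact ⟨t, by omega⟩
    obtain ⟨s, hs⟩ : ∃ s : ℤ, (j : ℤ) - k = 2 * s := by
      obtain ⟨a, ha⟩ := hoj; obtain ⟨b, hb⟩ := hok
      exact ⟨a - b, by omega⟩
    have hts : (t : ℤ) = s + k := by omega
    have htr : (j : ℝ) + k = 2 * t := by exact_mod_cast ht
    have hsr : (j : ℝ) - k = 2 * s := by exact_mod_cast hs
    set g : ℕ → ℂ := fun i => ((Real.cos (Real.pi * i * ((j : ℝ) + k) / m) : ℂ)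
        + z * (Real.cos (Real.pi * i * ((j : ℝ) - k) / m) : ℂ)) with hg
    -- Step 1: B = 2^m * ee(sum) * prod g
    have step1 : B m j k z
        = 2 ^ m * ee (∑ i ∈ Finset.Icc 1 m, (i : ℝ) * ((j : ℝ) + k) / m / 2)
            * ∏ i ∈ Finset.Icc 1 m, g i := by
      rw [B]
      simp only [Int.cast_natCast]
      rw [show (2:ℂ)^m = ∏ _i ∈ Finset.Icc 1 m, (2:ℂ) by
        rw [Finset.prod_const, Nat.card_Icc]; norm_num]
      rw [← ee_sum, ← Finset.prod_mul_distrib, ← Finset.prod_mul_distrib]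
      apply Finset.prod_congr rfl
      intro i _
      rw [factor_eq ((i:ℝ) * j / m) ((i:ℝ) * k / m) ((i:ℝ) * ((j:ℝ) + (k:ℝ)) / m) (by push_cast; ring) z]
      rw [show Real.pi * ((i:ℝ) * ((j:ℝ) + k) / m) = Real.pi * i * ((j:ℝ) + k) / m by ring,
        show Real.pi * ((i:ℝ) * j / m - (i:ℝ) * k / m) = Real.pi * i * ((j:ℝ) - k) / m by ring]
    -- the phase
    have hsum : (∑ i ∈ Finset.Icc 1 m, (i : ℝ) * ((j : ℝ) + k) / m / 2)
        = ((t * (m + 1) : ℕ) : ℝ) / 2 := by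
      rw [show ∀ S : Finset ℕ, (∑ i ∈ S, (i : ℝ) * ((j : ℝ) + k) / m / 2)
          = (∑ i ∈ S, (i : ℝ)) * (((j:ℝ) + k) / m / 2) from fun S => by
            rw [Finset.sum_mul]; exact Finset.sum_congr rfl fun i _ => by ring,
        gauss_real, htr]
      push_cast
      field_simp
    have hphase : ee (∑ i ∈ Finset.Icc 1 m, (i : ℝ) * ((j : ℝ) + k) / m / 2) = (-1 : ℂ) ^ t := by
      have hmp1 : Odd (m + 1) := Even.add_one ⟨n, by omega⟩
      rw [hsum, ee_half_nat, show t * (m + 1) = (m + 1) * t by ring, pow_mul,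
        Odd.neg_one_pow hmp1]
    -- reflection
    have grefl : ∀ i : ℕ, i ≤ m → g (m - i) = g i := by
      intro i hi
      have hcast : ((m - i : ℕ) : ℝ) = (m : ℝ) - i := by
        push_cast [Nat.cast_sub hi]; ring
      rw [hg]
      simp only
      rw [show Real.pi * ((m - i : ℕ) : ℝ) * ((j:ℝ) + k) / m
            = (t : ℝ) * (2 * Real.pi) - Real.pi * i * ((j:ℝ) + k) / m by
          rw [hcast, htr]; field_simp,
        show Real.pi * ((m - i : ℕ) : ℝ) * ((j:ℝ) - k) / m
            = (s : ℝ) * (2 * Real.pi) - Real.pi * i * ((j:ℝ) - k) / m by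
          rw [hcast, hsr]; field_simp,
        Real.cos_nat_mul_two_pi_sub, Real.cos_int_mul_two_pi_sub]
    -- values at n and 2n
    have gn : g n = (-1 : ℂ) ^ t * (1 - z) := by
      rw [hg]; simp only
      rw [show Real.pi * (n : ℝ) * ((j:ℝ) + k) / m = (t : ℝ) * Real.pi - 0 by
          rw [htr, hm2]; push_cast; field_simp; ring,
        show Real.pi * (n : ℝ) * ((j:ℝ) - k) / m = (s : ℝ) * Real.pi - 0 by
          rw [hsr, hm2]; push_cast; field_simp; ring,
        Real.cos_nat_mul_pi_sub, Real.cos_int_mul_pi_sub, Real.cos_zero]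
      have hsign : ((-1:ℝ) ^ (s : ℤ)) = -(-1:ℝ) ^ t := by
        have h1 : ((-1:ℝ) ^ (t : ℤ)) = (-1:ℝ) ^ s * (-1:ℝ) ^ (k : ℤ) := by
          rw [hts, zpow_add₀ (by norm_num : (-1:ℝ) ≠ 0)]
        rw [zpow_natCast, zpow_natCast, Odd.neg_one_pow hok] at h1
        linarith
      rw [hsign]
      push_cast
      ring
    have gm : g m = 1 + z := by
      rw [hg]; simp only
      rw [show Real.pi * (m : ℝ) * ((j:ℝ) + k) / m = (t : ℝ) * (2 * Real.pi) - 0 by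
          rw [htr]; field_simp; ring,
        show Real.pi * (m : ℝ) * ((j:ℝ) - k) / m = (s : ℝ) * (2 * Real.pi) - 0 by
          rw [hsr]; field_simp; ring,
        Real.cos_nat_mul_two_pi_sub, Real.cos_int_mul_two_pi_sub, Real.cos_zero]
      push_cast; ring
    have hsplit : ∏ i ∈ Finset.Icc 1 m, g i
        = (∏ i ∈ Finset.Icc 1 (n - 1), g i) ^ 2 * g n * g m := by
      have e0 : Finset.Icc 1 m = Finset.Ioc 0 m := by ext x; simp; omega
      have e0' : Finset.Icc 1 (n - 1) = Finset.Ioc 0 (n - 1) := by ext x; simp; omega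
      have c1 : (∏ i ∈ Finset.Ioc 0 (n-1), g i) * (∏ i ∈ Finset.Ioc (n-1) m, g i)
          = ∏ i ∈ Finset.Ioc 0 m, g i := Finset.prod_Ioc_consecutive g (by omega) (by omega)
      have c2 : (∏ i ∈ Finset.Ioc (n-1) n, g i) * (∏ i ∈ Finset.Ioc n m, g i)
          = ∏ i ∈ Finset.Ioc (n-1) m, g i := Finset.prod_Ioc_consecutive g (by omega) (by omega)
      have c3 : (∏ i ∈ Finset.Ioc n (m-1), g i) * (∏ i ∈ Finset.Ioc (m-1) m, g i)
          = ∏ i ∈ Finset.Ioc n m, g i := Finset.prod_Ioc_consecutive g (by omega) (by omega)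
      have s1 : Finset.Ioc (n-1) n = {n} := by ext x; simp [Finset.mem_Ioc]; omega
      have s2 : Finset.Ioc (m-1) m = {m} := by ext x; simp [Finset.mem_Ioc]; omega
      have hrefl : ∏ i ∈ Finset.Ioc n (m-1), g i = ∏ i ∈ Finset.Ioc 0 (n-1), g i := by
        apply Finset.prod_nbij' (fun a => m - a) (fun a => m - a)
        · intro a ha; simp [Finset.mem_Ioc] at *; omega
        · intro a ha; simp [Finset.mem_Ioc] at *; omega
        · intro a ha; simp [Finset.mem_Ioc] at ha; omega
        · intro a ha; simp [Finset.mem_Ioc] at ha; omega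
        · intro a ha; simp only [Finset.mem_Ioc] at ha
          have h2 := grefl (m - a) (by omega)
          rw [show m - (m - a) = a by omega] at h2
          exact h2
      rw [e0, e0', ← c1, ← c2, ← c3, s1, s2, hrefl, Finset.prod_singleton,
        Finset.prod_singleton]
      ring
    rw [step1, hphase, hsplit, gn, gm]
    have hdiv : m / 2 - 1 = n - 1 := by omega
    rw [hdiv, hg]
    simp only
    rw [Finset.prod_pow]
    have hps : ((-1:ℂ) ^ t) * ((-1:ℂ) ^ t) = 1 := by
      rw [← mul_pow]; norm_num
    linear_combination ((2:ℂ) ^ m *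
      (∏ i ∈ Finset.Icc 1 (n - 1), (((Real.cos (Real.pi * i * ((j : ℝ) + k) / m) : ℂ))
        + z * ((Real.cos (Real.pi * i * ((j : ℝ) - k) / m) : ℂ)))) ^ 2 * (1 - z) * (1 + z)) * hps
  · rw [if_neg hodd]
    have hojk : Odd (j + k) := by
      rcases Nat.even_or_odd j with hj2 | hj2 <;> rcases Nat.even_or_odd k with hk2 | hk2
      · exact absurd ⟨hj2, hk2⟩ hnotboth
      · exact Even.add_odd hj2 hk2
      · exact Odd.add_even hj2 hk2
      · exact absurd ⟨hj2, hk2⟩ hodd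
    rw [B]
    simp only [Int.cast_natCast]
    apply Finset.prod_eq_zero (i := n) (by simp [Finset.mem_Icc]; omega)
    rw [show (n : ℝ) * ((j:ℝ) + k) / m = ((j + k : ℕ) : ℝ) / 2 by
        rw [hm2]; push_cast; field_simp,
      show (n : ℝ) * (j:ℝ) / m = ((j : ℕ) : ℝ) / 2 by
        rw [hm2]; push_cast; field_simp,
      show (n : ℝ) * (k:ℝ) / m = ((k : ℕ) : ℝ) / 2 by
        rw [hm2]; push_cast; field_simp,
      ee_half_nat, ee_half_nat, ee_half_nat, Odd.neg_one_pow hojk]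
    rcases Nat.even_or_odd j with hj2 | hj2 <;> rcases Nat.even_or_odd k with hk2 | hk2
    · exact absurd ⟨hj2, hk2⟩ hnotboth
    · rw [Even.neg_one_pow hj2, Odd.neg_one_pow hk2]; ring
    · rw [Odd.neg_one_pow hj2, Even.neg_one_pow hk2]; ring
    · exact absurd ⟨hj2, hk2⟩ hodd
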